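/- arXiv:1210.6615 — 6 statements merged into one kernel-verified Lean document; each statement's English description precedes it below -/
import Mathlib

section
/- If f: V → B satisfies Δ_h^n f(x) = 0 for all x, h ∈ V (where V, B are rational vector spaces and n ∈ ℕ), then Δ_{h_n}⋯Δ_{h_1} f(x) = 0 for all x, h_1, ..., h_n ∈ V. -/
/-!
Let `ℚ[M]` act on functions `M → B` by translations and let `R = ℚ[M] / Ann(f)`. Then
`x ↦ [x]` is an additive character `φ` of `M` in the commutative `ℚ`-algebra `R` with
`(φ x - 1) ^ n = 0`, and the claim is `∏ i, (φ (h i) - 1) = 0`.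

As `φ x - 1` is nilpotent, `t ↦ φ x ^ t = (1 + (φ x - 1)) ^ t` is a polynomial in `t`; its
derivative at `0`, i.e. `log (φ x)`, is additive in `x`, has `n`-th power zero, and differs from
`φ x - 1` by a unit. A product of `n` elements of an additive submonoid whose elements all have
`n`-th power zero vanishes, by polarization: one peels off one factor at a time, reading off the
coefficient of `t` in the polynomial `q * (a + t * b) ^ (m + 1)`, which vanishes at all `t ∈ ℕ`.
-/

/-- The difference operator `Δ_h f (x) = f (x + h) - f x`. -/
def fdiff {V B : Type*} [Add V] [Sub B] (h : V) (f : V → B) : V → B :=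
  fun x => f (x + h) - f x

open Polynomial Finset

theorem Polynomial.eq_zero_of_forall_eval_natCast_eq_zero {R : Type*} [CommRing R]
    [IsAddTorsionFree R] {p : R[X]} (h : ∀ t : ℕ, p.eval (t : R) = 0) : p = 0 := by
  have hΔ : (fwdDiff 1)^[p.natDegree] p.eval 0 = 0 := by
    simp [fwdDiff_iter_eq_sum_shift, h]
  rw [p.fwdDiff_iter_degree_eq_factorial] at hΔ
  simp only [Pi.smul_apply, Pi.natCast_apply, smul_eq_mul] at hΔ
  rw [← leadingCoeff_eq_zero, ← nsmul_eq_zero_iff_right (Nat.factorial_ne_zero p.natDegree),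
    nsmul_eq_mul, mul_comm, hΔ]

theorem sum_range_pow_mul_of_pow_eq_zero {R : Type*} [CommRing R] {N : ℕ} {r : R}
    (hr : r ^ N = 0) (β : ℕ → R) :
    ∑ k ∈ range N, r ^ k * β k = β 0 + r * ∑ k ∈ range N, r ^ k * β (k + 1) := by
  rw [← add_zero (∑ k ∈ range N, r ^ k * β k), ← zero_mul (β N), ← hr,
    ← sum_range_succ, sum_range_succ', mul_sum, add_comm]
  simp only [pow_zero, one_mul, pow_succ', mul_assoc]

section NilpotentLog

variable {R : Type*} [CommRing R] [Algebra ℚ R] {N : ℕ} {r : R}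

noncomputable def binomialPoly (N : ℕ) (r : R) : R[X] :=
  ∑ k ∈ range N, C (r ^ k) * (Ring.choose (X : ℚ[X]) k).map (algebraMap ℚ R)

/-- The derivative at `t = 0` of `(1 + r) ^ t`, i.e. `log (1 + r)` for nilpotent `r`. -/
noncomputable def nilLog (N : ℕ) (r : R) : R :=
  (binomialPoly N r).coeff 1

theorem eval_natCast_binomialPoly (hr : r ^ N = 0) (t : ℕ) :
    (binomialPoly N r).eval (t : R) = (1 + r) ^ t := by
  have hchoose (k : ℕ) : (Ring.choose (X : ℚ[X]) k).eval (t : ℚ) = t.choose k := by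
    rw [← coe_evalRingHom, Ring.map_choose, coe_evalRingHom, eval_X, Ring.choose_natCast]
  simp only [binomialPoly, eval_finsetSum, eval_mul, eval_C, eval_natCast_map, hchoose,
    map_natCast]
  rw [add_comm, add_pow]
  simp only [one_pow, mul_one]
  calc ∑ k ∈ range N, r ^ k * t.choose k = ∑ k ∈ range (N + (t + 1)), r ^ k * t.choose k :=
        sum_subset (range_subset_range.2 (by omega)) fun k _ hk => by
          rw [pow_eq_zero_of_le (by simpa using hk) hr, zero_mul]
    _ = ∑ k ∈ range (t + 1), r ^ k * t.choose k :=
        (sum_subset (range_subset_range.2 (by omega)) fun k _ hk => by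
          rw [Nat.choose_eq_zero_of_lt (by simpa using hk), Nat.cast_zero, mul_zero]).symm

theorem binomialPoly_coeff_zero (hr : r ^ N = 0) : (binomialPoly N r).coeff 0 = 1 := by
  simpa [coeff_zero_eq_eval_zero] using eval_natCast_binomialPoly hr 0

theorem binomialPoly_eq_mul_of_one_add_eq_mul {a b c : R} (ha : a ^ N = 0) (hb : b ^ N = 0)
    (hc : c ^ N = 0) (habc : 1 + c = (1 + a) * (1 + b)) :
    binomialPoly N c = binomialPoly N a * binomialPoly N b := by
  have := IsAddTorsionFree.of_module_rat R
  refine sub_eq_zero.1 (eq_zero_of_forall_eval_natCast_eq_zero fun t => ?_)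
  rw [eval_sub, eval_mul, eval_natCast_binomialPoly ha, eval_natCast_binomialPoly hb,
    eval_natCast_binomialPoly hc, habc, mul_pow, sub_self]

theorem nilLog_eq_add_of_one_add_eq_mul {a b c : R} (ha : a ^ N = 0) (hb : b ^ N = 0)
    (hc : c ^ N = 0) (habc : 1 + c = (1 + a) * (1 + b)) :
    nilLog N c = nilLog N a + nilLog N b := by
  rw [nilLog, binomialPoly_eq_mul_of_one_add_eq_mul ha hb hc habc, mul_coeff_one,
    binomialPoly_coeff_zero ha, binomialPoly_coeff_zero hb, nilLog, nilLog]
  ring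

theorem exists_isUnit_nilLog_eq_mul (hr : r ^ N = 0) : ∃ w, IsUnit w ∧ nilLog N r = r * w := by
  set β : ℕ → R := fun k => algebraMap ℚ R ((Ring.choose (X : ℚ[X]) k).coeff 1)
  have hβ0 : β 0 = 0 := by simp [β, coeff_one]
  have hβ1 : β 1 = 1 := by simp [β]
  have hlog : nilLog N r = r * ∑ k ∈ range N, r ^ k * β (k + 1) := by
    rw [← zero_add (_ * _), ← hβ0, ← sum_range_pow_mul_of_pow_eq_zero hr]
    simp only [nilLog, binomialPoly, finsetSum_coeff, coeff_C_mul, coeff_map, β]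
  refine ⟨_, ?_, hlog⟩
  rw [sum_range_pow_mul_of_pow_eq_zero hr, zero_add, hβ1]
  exact ((Commute.all _ _).isNilpotent_mul_right ⟨N, hr⟩).isUnit_one_add

end NilpotentLog

section Polarization

variable {R : Type*} [CommRing R] [IsAddTorsionFree R]

theorem mul_pow_mul_eq_zero_of_forall_mul_add_nsmul_pow_eq_zero {q a b : R} {m : ℕ}
    (h : ∀ t : ℕ, q * (a + t • b) ^ (m + 1) = 0) : q * a ^ m * b = 0 := by
  have hp : C q * (C a + C b * X) ^ (m + 1) = 0 :=
    eq_zero_of_forall_eval_natCast_eq_zero fun t => by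
      rw [eval_mul, eval_pow, eval_add, eval_mul, eval_C, eval_C, eval_C, eval_X, mul_comm b,
        ← nsmul_eq_mul]
      exact h t
  have hderiv := congrArg (fun p => (derivative p).eval 0) hp
  simp only [derivative_mul, derivative_C, zero_mul, zero_add, derivative_pow, derivative_add,
    derivative_X, eval_mul, eval_C, eval_pow, eval_add, eval_X, mul_zero, add_zero, mul_one,
    derivative_zero, eval_zero, Nat.add_sub_cancel] at hderiv
  rw [← nsmul_eq_zero_iff_right m.succ_ne_zero, nsmul_eq_mul]
  linear_combination hderiv

theorem AddSubmonoid.prod_eq_zero_of_forall_pow_eq_zero (S : AddSubmonoid R) {n : ℕ}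
    (hS : ∀ s ∈ S, s ^ n = 0) (a : Fin n → R) (ha : ∀ i, a i ∈ S) : ∏ i, a i = 0 := by
  suffices key : ∀ j ≤ n, ∀ a : Fin j → R, (∀ i, a i ∈ S) →
      ∀ s ∈ S, (∏ i, a i) * s ^ (n - j) = 0 by
    simpa using key n le_rfl a ha 0 S.zero_mem
  intro j
  induction j with
  | zero => simpa using hS
  | succ j ih =>
    intro hj a ha s hs
    obtain ⟨m, hm⟩ : ∃ m, n - j = m + 1 := ⟨n - (j + 1), by omega⟩
    rw [Fin.prod_univ_castSucc, mul_right_comm, show n - (j + 1) = m by omega]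
    refine mul_pow_mul_eq_zero_of_forall_mul_add_nsmul_pow_eq_zero fun t => ?_
    rw [← hm]
    exact ih (by omega) _ (fun i => ha _) _ (S.add_mem hs (S.nsmul_mem (ha _) t))

end Polarization

theorem AddChar.prod_sub_one_eq_zero {M R : Type*} [AddCommMonoid M] [CommRing R] [Algebra ℚ R]
    (φ : AddChar M R) {n : ℕ} (hφ : ∀ x, (φ x - 1) ^ n = 0) (h : Fin n → M) :
    ∏ i, (φ (h i) - 1) = 0 := by
  have := IsAddTorsionFree.of_module_rat R
  let log : M →+ R := AddMonoidHom.mk' (fun x => nilLog n (φ x - 1)) fun x y =>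
    nilLog_eq_add_of_one_add_eq_mul (hφ x) (hφ y) (hφ (x + y)) (by rw [map_add_eq_mul]; ring)
  choose w hw hlog using fun x => exists_isUnit_nilLog_eq_mul (hφ x)
  have hlog_prod : ∏ i, log (h i) = 0 := by
    refine (AddMonoidHom.mrange log).prod_eq_zero_of_forall_pow_eq_zero ?_ _ fun i => ⟨h i, rfl⟩
    rintro _ ⟨x, rfl⟩
    rw [AddMonoidHom.mk'_apply, hlog, mul_pow, hφ, zero_mul]
  simp only [log, AddMonoidHom.mk'_apply, hlog, prod_mul_distrib] at hlog_prod
  exact (IsUnit.prod_iff.2 fun i _ => hw (h i)).mul_left_eq_zero.1 hlog_prod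

section Translation

variable (M B : Type*) [AddCommMonoid M] [AddCommGroup B] [Module ℚ B]

def translationHom : Multiplicative M →* Module.End ℚ (M → B) where
  toFun x := LinearMap.funLeft ℚ B (· + x.toAdd)
  map_one' := by ext; simp
  map_mul' x y := by ext; simp [add_assoc]

variable {M B}

theorem lift_translationHom_of_sub_one (x : M) :
    ⇑(AddMonoidAlgebra.lift ℚ _ M (translationHom M B)
      (AddMonoidAlgebra.of ℚ M (.ofAdd x) - 1)) = fwdDiff x := by
  ext g y
  simp [translationHom, fwdDiff]

theorem foldr_fwdDiff_eq_lift_translationHom (l : List M) (g : M → B) :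
    l.foldr fwdDiff g = AddMonoidAlgebra.lift ℚ _ M (translationHom M B)
      ((l.map fun x => AddMonoidAlgebra.of ℚ M (.ofAdd x) - 1).prod) g := by
  induction l with
  | nil => simp
  | cons x l ih =>
    rw [List.foldr_cons, ih, List.map_cons, List.prod_cons, map_mul, Module.End.mul_apply,
      lift_translationHom_of_sub_one]

theorem foldr_fwdDiff_eq_zero_of_fwdDiff_iter_eq_zero {f : M → B} {n : ℕ}
    (hf : ∀ x h, (fwdDiff h)^[n] f x = 0) (h : Fin n → M) :
    (List.ofFn h).foldr fwdDiff f = 0 := by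
  set T := AddMonoidAlgebra.lift ℚ _ M (translationHom M B)
  set I := Ideal.comap T (Ideal.torsionOf (Module.End ℚ (M → B)) (M → B) f)
  have hI (a : AddMonoidAlgebra ℚ M) : a ∈ I ↔ T a f = 0 := Iff.rfl
  let φ : AddChar M (AddMonoidAlgebra ℚ M ⧸ I) := AddChar.toMonoidHomEquiv.symm
    ((Ideal.Quotient.mk I).toMonoidHom.comp (AddMonoidAlgebra.of ℚ M))
  have hφ (x : M) : φ x - 1 = Ideal.Quotient.mk I (AddMonoidAlgebra.of ℚ M (.ofAdd x) - 1) := by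
    simp [φ]
  have hprod := φ.prod_sub_one_eq_zero (n := n) (fun x => by
    rw [hφ, ← map_pow, Ideal.Quotient.eq_zero_iff_mem, hI, map_pow, Module.End.pow_apply,
      lift_translationHom_of_sub_one]
    exact funext (hf · x)) h
  simp only [hφ, ← map_prod, Ideal.Quotient.eq_zero_iff_mem, hI] at hprod
  rw [foldr_fwdDiff_eq_lift_translationHom, List.map_ofFn, List.prod_ofFn]
  exact hprod

end Translation

theorem stmt_0_general {V B : Type*} [AddCommGroup V] [AddCommGroup B] [Module ℚ B]
    (n : ℕ) (f : V → B)
    (hf : ∀ x h : V, (fdiff h)^[n] f x = 0) :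
    ∀ (h : Fin n → V) (x : V), ((List.ofFn h).foldr fdiff f) x = 0 :=
  fun h => congrFun (foldr_fwdDiff_eq_zero_of_fwdDiff_iter_eq_zero hf h)

theorem stmt_0 {V B : Type*} [AddCommGroup V] [Module ℚ V] [AddCommGroup B] [Module ℚ B]
    (n : ℕ) (f : V → B)
    (hf : ∀ x h : V, (fdiff h)^[n] f x = 0) :
    ∀ (h : Fin n → V) (x : V), ((List.ofFn h).foldr fdiff f) x = 0 :=
  stmt_0_general n f hf
end

section
/- Let V, B be vector spaces over ℚ and let f: V → B satisfy f(0) = 0 and c_1 f(ax+by) + c_2 f(ax-by) = c_3 f(x) + c_4 f(y) + c_5 f(x+y) + c_6 f(x-y) for all x, y ∈ V, where a, b, c_1, c_3 ∈ ℚ are nonzero, c_1 + c_2 ≠ 0, and |(c_3+c_5+c_6)/(c_1+c_2)| ∉ {0, 1}. If f ≠ 0, then there exists a unique k ∈ {1, 2, 3, 4} with |a|^k = |(c_3+c_5+c_6)/(c_1+c_2)| and a symmetric k-additive function A: V^k → B such that f(x) = A(x, ..., x) for all x ∈ V. -/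
/-!
Differencing the equation in `x` kills the term `c₄ f y` and leaves a vanishing sum
`∑ γ, g γ (x + γ • y)` over the five slopes `γ ∈ {b/a, -b/a, 0, 1, -1}`. By Székelyhidi's lemma each
member of such a family is a generalized polynomial of degree at most `3`, so `f` has degree at
most `4`; and `y = 0` gives `f (a • x) = λ • f x` with `λ = (c₃ + c₅ + c₆) / (c₁ + c₂)`.

The top polar form of a generalized polynomial of degree `≤ n` (its `n`-fold difference, a function
of the `n` steps) is symmetric and `n`-additive. Scaling the steps by `a` multiplies it by `aⁿ`, and
by `λ` because of the eigen-relation, so the degree drops unless `aⁿ = λ`. Since `|λ| ≠ 1` at most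
one exponent `K` satisfies this, and `f ≠ 0` forces it to exist with `1 ≤ K ≤ 4`. Then `f` has
degree `≤ K`, and `x ↦ f (q • x) - q ^ K • f x` has vanishing top polar form and satisfies the same
eigen-relation, hence vanishes. Finally, for `f` homogeneous of degree `K` Newton's formula gives
`Δₓᴷ f 0 = ∑ⱼ (-1)ᴷ⁻ʲ C(K, j) jᴷ f x = K! f x`, so `f` is the diagonal of its polar form over `K!`.
-/

/-- `a : V^k → B` is `k`-additive: additive in each variable. -/
def MultiAdditive {k : ℕ} {V B : Type*} [Add V] [Add B] (a : (Fin k → V) → B) : Prop :=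
  ∀ (i : Fin k) (v : Fin k → V) (x y : V),
    a (Function.update v i (x + y)) = a (Function.update v i x) + a (Function.update v i y)

/-- `a : V^k → B` is symmetric: invariant under permutations of the arguments. -/
def SymmetricFn {k : ℕ} {V B : Type*} (a : (Fin k → V) → B) : Prop :=
  ∀ (σ : Equiv.Perm (Fin k)) (v : Fin k → V), a (v ∘ σ) = a v

open fwdDiff
open scoped Nat

lemma List.ofFn_update {α : Type*} {n : ℕ} (v : Fin n → α) (i : Fin n) (x : α) :
    List.ofFn (Function.update v i x) = (List.ofFn v).set i x := by
  apply List.ext_getElem (by simp)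
  intro j h₁ h₂
  simp [Function.update_apply, List.getElem_set, Fin.ext_iff, eq_comm]

section

variable {V B : Type*} [AddCommGroup V] [AddCommGroup B]

lemma fwdDiff_fwdDiff_comm (h k : V) (f : V → B) : Δ_[h] (Δ_[k] f) = Δ_[k] (Δ_[h] f) := by
  funext x
  simp only [fwdDiff, add_right_comm x h k]
  abel

lemma fwdDiff_add_step (h k : V) (f : V → B) :
    Δ_[h + k] f = Δ_[h] f + Δ_[k] f + Δ_[h] (Δ_[k] f) := by
  funext x
  simp only [fwdDiff, Pi.add_apply, add_assoc]
  abel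

lemma List.Perm.foldr_fwdDiff_eq {l l' : List V} (hl : l.Perm l') (f : V → B) :
    l.foldr fwdDiff f = l'.foldr fwdDiff f :=
  haveI : LeftCommutative (fwdDiff : V → (V → B) → V → B) := ⟨fwdDiff_fwdDiff_comm⟩
  hl.foldr_eq f

lemma foldr_fwdDiff_fwdDiff (l : List V) (h : V) (f : V → B) :
    l.foldr fwdDiff (Δ_[h] f) = Δ_[h] (l.foldr fwdDiff f) := by
  simpa using (List.perm_append_singleton h l).foldr_fwdDiff_eq f

lemma foldr_fwdDiff_sub (l : List V) (f g : V → B) :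
    l.foldr fwdDiff (f - g) = l.foldr fwdDiff f - l.foldr fwdDiff g := by
  induction l with
  | nil => rfl
  | cons h l ih =>
    rw [List.foldr_cons, List.foldr_cons, List.foldr_cons, ih]
    funext x
    simp only [fwdDiff, Pi.sub_apply]
    abel

lemma foldr_fwdDiff_const_smul {R : Type*} [Monoid R] [DistribMulAction R B] (l : List V) (c : R)
    (f : V → B) : l.foldr fwdDiff (c • f) = c • l.foldr fwdDiff f := by
  induction l with
  | nil => rfl
  | cons h l ih => rw [List.foldr_cons, List.foldr_cons, ih, fwdDiff_const_smul]

lemma foldr_fwdDiff_comp_smul {R : Type*} [Monoid R] [DistribMulAction R V] (l : List V) (c : R)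
    (f : V → B) (x : V) :
    l.foldr fwdDiff (fun y => f (c • y)) x = (l.map (c • ·)).foldr fwdDiff f (c • x) := by
  induction l generalizing x with
  | nil => rfl
  | cons h l ih => simp only [List.foldr_cons, List.map_cons, fwdDiff, ih, smul_add]

lemma foldr_fwdDiff_replicate (n : ℕ) (h : V) (f : V → B) :
    (List.replicate n h).foldr fwdDiff f = (fwdDiff h)^[n] f := by
  induction n with
  | zero => rfl
  | succ n ih => rw [List.replicate_succ, List.foldr_cons, ih, Function.iterate_succ_apply']

/-- Fréchet's generalized polynomials of degree `< n`. -/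
def IsGenPolyDegLT (n : ℕ) (f : V → B) : Prop :=
  ∀ l : List V, l.length = n → l.foldr fwdDiff f = 0

lemma isGenPolyDegLT_zero_iff {f : V → B} : IsGenPolyDegLT 0 f ↔ f = 0 :=
  ⟨fun hf => hf [] rfl, fun hf l hl => by rw [List.length_eq_zero_iff.1 hl, List.foldr_nil, hf]⟩

lemma isGenPolyDegLT_succ_iff {n : ℕ} {f : V → B} :
    IsGenPolyDegLT (n + 1) f ↔ ∀ h, IsGenPolyDegLT n (Δ_[h] f) := by
  refine ⟨fun hf h l hl => ?_, fun hf l hl => ?_⟩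
  · rw [foldr_fwdDiff_fwdDiff]
    exact hf (h :: l) (by rw [List.length_cons, hl])
  · obtain ⟨h, l, rfl⟩ := List.exists_cons_of_length_eq_add_one hl
    rw [List.foldr_cons, ← foldr_fwdDiff_fwdDiff]
    exact hf h l (by simpa using hl)

namespace IsGenPolyDegLT

variable {n : ℕ} {f g : V → B}

lemma succ (hf : IsGenPolyDegLT n f) : IsGenPolyDegLT (n + 1) f := by
  rintro (_ | ⟨h, l⟩) hl
  · simp at hl
  · rw [List.foldr_cons, hf l (by simpa using hl)]
    funext x
    simp [fwdDiff]

lemma mono {m : ℕ} (hf : IsGenPolyDegLT n f) (hnm : n ≤ m) : IsGenPolyDegLT m f := by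
  induction m, hnm using Nat.le_induction with
  | base => exact hf
  | succ m _ ih => exact ih.succ

lemma sub (hf : IsGenPolyDegLT n f) (hg : IsGenPolyDegLT n g) : IsGenPolyDegLT n (f - g) :=
  fun l hl => by rw [foldr_fwdDiff_sub, hf l hl, hg l hl, sub_zero]

lemma const_smul {R : Type*} [Monoid R] [DistribMulAction R B] (hf : IsGenPolyDegLT n f) (c : R) :
    IsGenPolyDegLT n (c • f) :=
  fun l hl => by rw [foldr_fwdDiff_const_smul, hf l hl, smul_zero]

lemma comp_smul {R : Type*} [Monoid R] [DistribMulAction R V] (hf : IsGenPolyDegLT n f) (c : R) :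
    IsGenPolyDegLT n (fun x => f (c • x)) :=
  fun l hl => funext fun x => by
    rw [foldr_fwdDiff_comp_smul, hf _ (by rw [List.length_map, hl])]
    rfl

lemma foldr_fwdDiff_apply_eq_apply_zero (hf : IsGenPolyDegLT (n + 1) f) {l : List V}
    (hl : l.length = n) (x : V) : l.foldr fwdDiff f x = l.foldr fwdDiff f 0 := by
  have h := congrFun (hf (x :: l) (by rw [List.length_cons, hl])) 0
  rw [List.foldr_cons, fwdDiff, zero_add, Pi.zero_apply] at h
  exact sub_eq_zero.1 h

end IsGenPolyDegLT

def polarForm (n : ℕ) (f : V → B) (v : Fin n → V) : B := (List.ofFn v).foldr fwdDiff f 0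

lemma symmetricFn_polarForm (n : ℕ) (f : V → B) : SymmetricFn (polarForm n f) :=
  fun σ v => congrFun ((σ.ofFn_comp_perm v).foldr_fwdDiff_eq f) 0

lemma polarForm_sub (n : ℕ) (f g : V → B) : polarForm n (f - g) = polarForm n f - polarForm n g :=
  funext fun v => by simp only [polarForm, foldr_fwdDiff_sub, Pi.sub_apply]

lemma polarForm_const_smul {R : Type*} [Monoid R] [DistribMulAction R B] (n : ℕ) (c : R)
    (f : V → B) : polarForm n (c • f) = c • polarForm n f :=
  funext fun v => by simp only [polarForm, foldr_fwdDiff_const_smul, Pi.smul_apply]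

lemma polarForm_comp_smul {R : Type*} [Monoid R] [DistribMulAction R V] (n : ℕ) (c : R)
    (f : V → B) (v : Fin n → V) : polarForm n (fun x => f (c • x)) v = polarForm n f (c • v) := by
  simp only [polarForm, foldr_fwdDiff_comp_smul, smul_zero, List.map_ofFn]
  rfl

lemma polarForm_const (n : ℕ) (f : V → B) (h : V) :
    polarForm n f (fun _ => h) = (fwdDiff h)^[n] f 0 := by
  rw [polarForm, List.ofFn_const, foldr_fwdDiff_replicate]

lemma polarForm_const_eq_factorial_smul {n : ℕ} {f : V → B}
    (hhom : ∀ (j : ℕ) (x : V), f (j • x) = j ^ n • f x) (x : V) :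
    polarForm n f (fun _ => x) = n ! • f x := by
  have hfac : ∑ j ∈ Finset.range (n + 1), (-1 : ℤ) ^ (n - j) * n.choose j * (j : ℤ) ^ n = n ! := by
    have h := congrFun (fwdDiff_iter_eq_factorial (R := ℤ) (n := n)) 0
    rw [fwdDiff_iter_eq_sum_shift] at h
    simpa using h
  rw [polarForm_const, fwdDiff_iter_eq_sum_shift, ← natCast_zsmul, ← hfac, Finset.sum_smul]
  refine Finset.sum_congr rfl fun j _ => ?_
  rw [zero_add, hhom, mul_smul, mul_smul, natCast_zsmul, ← Nat.cast_pow, natCast_zsmul, mul_smul,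
    natCast_zsmul]

lemma IsGenPolyDegLT.multiAdditive_polarForm {n : ℕ} {f : V → B} (hf : IsGenPolyDegLT (n + 1) f) :
    MultiAdditive (polarForm n f) := by
  intro i v x y
  set L := (List.ofFn v).eraseIdx i
  have hL : L.length + 1 = n := by
    have := i.isLt
    simp only [L, List.length_eraseIdx, List.length_ofFn, i.isLt, if_true]
    omega
  have key : ∀ z, polarForm n f (Function.update v i z) = Δ_[z] (L.foldr fwdDiff f) 0 := fun z => by
    rw [polarForm, List.ofFn_update, (List.set_perm_cons_eraseIdx (by simp) z).foldr_fwdDiff_eq]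
    rfl
  have hxy : Δ_[x] (Δ_[y] (L.foldr fwdDiff f)) = 0 := hf (x :: y :: L) (by simp [hL])
  rw [key, key, key, fwdDiff_add_step, hxy, add_zero, Pi.add_apply]

lemma IsGenPolyDegLT.of_polarForm_eq_zero {n : ℕ} {f : V → B} (hf : IsGenPolyDegLT (n + 1) f)
    (h0 : polarForm n f = 0) : IsGenPolyDegLT n f := by
  rintro l rfl
  funext x
  rw [hf.foldr_fwdDiff_apply_eq_apply_zero rfl, ← List.ofFn_getElem (xs := l)]
  exact congrFun h0 _

lemma isGenPolyDegLT_of_sum_apply_add_smul_eq_zero {𝕜 : Type*} [Field 𝕜] [Module 𝕜 V] (n : ℕ)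
    (S : Finset 𝕜) (g : 𝕜 → V → B) (hS : S.card ≤ n + 1)
    (hg : ∀ x y : V, ∑ γ ∈ S, g γ (x + γ • y) = 0) {γ₀ : 𝕜} (hγ₀ : γ₀ ∈ S) :
    IsGenPolyDegLT n (g γ₀) := by
  classical
  induction n generalizing S g with
  | zero =>
    obtain rfl : S = {γ₀} := Finset.eq_singleton_iff_unique_mem.2
      ⟨hγ₀, fun γ hγ => Finset.card_le_one.1 hS γ hγ γ₀ hγ₀⟩
    refine isGenPolyDegLT_zero_iff.2 (funext fun x => ?_)
    simpa using hg x 0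
  | succ n ih =>
    rcases le_or_gt S.card (n + 1) with hle | hgt
    · exact (ih S g hle hg hγ₀).succ
    obtain ⟨γ₁, hγ₁, hne⟩ := Finset.exists_mem_ne (by omega : 1 < S.card) γ₀
    refine isGenPolyDegLT_succ_iff.2 fun w => ?_
    set z : V := (γ₀ - γ₁)⁻¹ • w
    have hw : (γ₀ - γ₁) • z = w := smul_inv_smul₀ (sub_ne_zero.2 hne.symm) w
    -- Replacing `(x, y)` by `(x - γ₁ • z, y + z)` moves the argument of `g γ` by `(γ - γ₁) • z`,
    -- so the differenced family loses its `γ₁` member.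
    have hshift : ∀ x y : V, ∀ γ : 𝕜, x + γ • y + (γ - γ₁) • z = (x - γ₁ • z) + γ • (y + z) :=
      fun x y γ => by rw [smul_add, sub_smul]; abel
    have hg' : ∀ x y : V, ∑ γ ∈ S.erase γ₁, Δ_[(γ - γ₁) • z] (g γ) (x + γ • y) = 0 := by
      intro x y
      rw [Finset.sum_erase _ (by simp [fwdDiff])]
      simp only [fwdDiff, hshift, Finset.sum_sub_distrib, hg, sub_zero]
    have key := ih (S.erase γ₁) (fun γ => Δ_[(γ - γ₁) • z] (g γ))
      (by rw [Finset.card_erase_of_mem hγ₁]; omega) hg' (Finset.mem_erase.2 ⟨hne.symm, hγ₀⟩)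
    simpa only [hw] using key

variable [Module ℚ V] [Module ℚ B]

lemma MultiAdditive.map_smul {k : ℕ} {A : (Fin k → V) → B} (hA : MultiAdditive A) (q : ℚ)
    (v : Fin k → V) : A (q • v) = q ^ k • A v := by
  let M : MultilinearMap ℚ (fun _ : Fin k => V) B :=
    { toFun := A
      map_update_add' := fun v i x y => by convert hA i v x y
      map_update_smul' := fun v i c x => by
        rename_i inst
        obtain rfl := Subsingleton.elim inst (instDecidableEqFin k)
        exact map_rat_smul (AddMonoidHom.mk' (fun x => A (Function.update v i x)) (hA i v)) c x }
  have h := M.map_smul_univ (fun _ => q) v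
  rwa [Finset.prod_const, Finset.card_univ, Fintype.card_fin] at h

lemma IsGenPolyDegLT.of_apply_smul_eq_smul {m n : ℕ} {f : V → B} {c μ : ℚ}
    (hf : IsGenPolyDegLT n f) (heig : ∀ x, f (c • x) = μ • f x)
    (hne : ∀ k, m ≤ k → k < n → c ^ k ≠ μ) : IsGenPolyDegLT m f := by
  induction n with
  | zero => exact hf.mono m.zero_le
  | succ n ih =>
    rcases le_or_gt (n + 1) m with hnm | hmn
    · exact hf.mono hnm
    refine ih (hf.of_polarForm_eq_zero (funext fun v => ?_)) fun k hmk hkn => hne k hmk (by omega)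
    have hcomp : (fun x => f (c • x)) = μ • f := funext heig
    have h : (c ^ n - μ) • polarForm n f v = 0 := by
      rw [sub_smul, sub_eq_zero, ← hf.multiAdditive_polarForm.map_smul, ← polarForm_comp_smul,
        hcomp, polarForm_const_smul, Pi.smul_apply]
    exact (smul_eq_zero.1 h).resolve_left (sub_ne_zero.2 (hne n (by omega) n.lt_succ_self))

lemma IsGenPolyDegLT.apply_smul_eq_pow_smul {n : ℕ} {f : V → B} {c μ : ℚ}
    (hf : IsGenPolyDegLT (n + 1) f) (heig : ∀ x, f (c • x) = μ • f x) (hne : ∀ k < n, c ^ k ≠ μ)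
    (q : ℚ) (x : V) : f (q • x) = q ^ n • f x := by
  set g : V → B := (fun x => f (q • x)) - q ^ n • f
  have hg : IsGenPolyDegLT (n + 1) g := (hf.comp_smul q).sub (hf.const_smul _)
  have hg0 : polarForm n g = 0 := by
    rw [polarForm_sub, polarForm_const_smul, sub_eq_zero]
    funext v
    rw [polarForm_comp_smul, hf.multiAdditive_polarForm.map_smul, Pi.smul_apply]
  have hgeig : ∀ x, g (c • x) = μ • g x := fun x => by
    simp only [g, Pi.sub_apply, Pi.smul_apply, smul_comm q c x, heig, smul_sub, smul_comm μ (q ^ n)]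
  have hgz := (hg.of_polarForm_eq_zero hg0).of_apply_smul_eq_smul (m := 0) hgeig
    fun k _ hk => hne k hk
  exact sub_eq_zero.1 (congrFun (isGenPolyDegLT_zero_iff.1 hgz) x)

lemma IsGenPolyDegLT.exists_eq_diag {n : ℕ} {f : V → B} (hf : IsGenPolyDegLT (n + 1) f)
    (hhom : ∀ (q : ℚ) (x : V), f (q • x) = q ^ n • f x) :
    ∃ A : (Fin n → V) → B, MultiAdditive A ∧ SymmetricFn A ∧ ∀ x : V, f x = A (fun _ => x) := by
  have hhom' : ∀ (j : ℕ) (x : V), f (j • x) = j ^ n • f x := fun j x => by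
    rw [← Nat.cast_smul_eq_nsmul ℚ, hhom, ← Nat.cast_pow, Nat.cast_smul_eq_nsmul]
  refine ⟨polarForm n ((n ! : ℚ)⁻¹ • f), (hf.const_smul _).multiAdditive_polarForm,
    symmetricFn_polarForm _ _, fun x => ?_⟩
  rw [polarForm_const_smul, Pi.smul_apply, polarForm_const_eq_factorial_smul hhom',
    ← Nat.cast_smul_eq_nsmul ℚ, inv_smul_smul₀ (by positivity)]

lemma isGenPolyDegLT_five_of_functional_eq (a b c₁ c₂ c₃ c₄ c₅ c₆ : ℚ) (ha : a ≠ 0) (hb : b ≠ 0)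
    (hc₃ : c₃ ≠ 0) (f : V → B)
    (hf : ∀ x y : V,
      c₁ • f (a • x + b • y) + c₂ • f (a • x - b • y) =
        c₃ • f x + c₄ • f y + c₅ • f (x + y) + c₆ • f (x - y)) :
    IsGenPolyDegLT 5 f := by
  classical
  -- Differencing in `x` removes `c₄ • f y`, the only term not of the form `g γ (x + γ • y)`.
  refine isGenPolyDegLT_succ_iff.2 fun w => ?_
  set r := b / a
  have hr : r ≠ 0 := div_ne_zero hb ha
  set F : V → B := Δ_[w] (fun t => f (a • t))
  set G : V → B := Δ_[w] f
  let g : ℚ → V → B := fun γ t =>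
    (if γ = r then c₁ • F t else 0) + (if γ = -r then c₂ • F t else 0) -
      (if γ = 0 then c₃ • G t else 0) - (if γ = 1 then c₅ • G t else 0) -
      (if γ = -1 then c₆ • G t else 0)
  have hsum : ∀ x y : V, ∑ γ ∈ {r, -r, 0, 1, -1}, g γ (x + γ • y) = 0 := by
    intro x y
    have e : ∀ t, c₁ • f (a • (t + r • y)) + c₂ • f (a • (t + (-r) • y)) -
        c₃ • f (t + (0 : ℚ) • y) - c₅ • f (t + (1 : ℚ) • y) - c₆ • f (t + (-1 : ℚ) • y) =
          c₄ • f y := fun t => by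
      rw [smul_add, smul_add, smul_smul, smul_smul, mul_neg, mul_div_cancel₀ _ ha, neg_smul,
        ← sub_eq_add_neg, zero_smul, add_zero, one_smul, neg_one_smul, ← sub_eq_add_neg, hf]
      abel
    simp only [g, Finset.sum_add_distrib, Finset.sum_sub_distrib, Finset.sum_ite_eq',
      Finset.mem_insert, Finset.mem_singleton, true_or, or_true, if_true, F, G, fwdDiff,
      add_right_comm _ _ w]
    linear_combination (norm := module) e (x + w) - e x
  have h0 := isGenPolyDegLT_of_sum_apply_add_smul_eq_zero 4 _ g (Finset.card_le_five) hsum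
    (γ₀ := 0) (by simp)
  have hg0 : g 0 = -(c₃ • G) := by
    funext t
    simp [g, hr.symm, hr]
  rw [hg0] at h0
  simpa [G, smul_smul, hc₃] using h0.const_smul (-c₃⁻¹)

lemma apply_smul_eq_of_functional_eq (a b c₁ c₂ c₃ c₄ c₅ c₆ : ℚ) (hc₁₂ : c₁ + c₂ ≠ 0) (f : V → B)
    (hf0 : f 0 = 0)
    (hf : ∀ x y : V,
      c₁ • f (a • x + b • y) + c₂ • f (a • x - b • y) =
        c₃ • f x + c₄ • f y + c₅ • f (x + y) + c₆ • f (x - y)) (x : V) :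
    f (a • x) = ((c₃ + c₅ + c₆) / (c₁ + c₂)) • f x := by
  have h := hf x 0
  simp only [smul_zero, add_zero, sub_zero, hf0] at h
  rw [← add_smul, ← add_smul, ← add_smul] at h
  rw [div_eq_inv_mul, mul_smul, ← h, inv_smul_smul₀ hc₁₂]

end

theorem stmt_7_general {V B : Type*} [AddCommGroup V] [Module ℚ V] [AddCommGroup B] [Module ℚ B]
    (a b c₁ c₂ c₃ c₄ c₅ c₆ : ℚ)
    (ha : a ≠ 0) (hb : b ≠ 0) (hc₃ : c₃ ≠ 0) (hc₁₂ : c₁ + c₂ ≠ 0)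
    (hlam1 : |(c₃ + c₅ + c₆) / (c₁ + c₂)| ≠ 1)
    (f : V → B) (hf0 : f 0 = 0) (hfne : f ≠ 0)
    (hf : ∀ x y : V,
      c₁ • f (a • x + b • y) + c₂ • f (a • x - b • y) =
        c₃ • f x + c₄ • f y + c₅ • f (x + y) + c₆ • f (x - y)) :
    ∃! k : ℕ, k ∈ Finset.Icc 1 4 ∧
      |a| ^ k = |(c₃ + c₅ + c₆) / (c₁ + c₂)| ∧
      ∃ A : (Fin k → V) → B, MultiAdditive A ∧ SymmetricFn A ∧
        ∀ x : V, f x = A (fun _ => x) := by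
  set lam := (c₃ + c₅ + c₆) / (c₁ + c₂)
  have hpoly := isGenPolyDegLT_five_of_functional_eq a b c₁ c₂ c₃ c₄ c₅ c₆ ha hb hc₃ f hf
  have heig := apply_smul_eq_of_functional_eq a b c₁ c₂ c₃ c₄ c₅ c₆ hc₁₂ f hf0 hf
  obtain ⟨K, hK5, hK⟩ : ∃ K < 5, a ^ K = lam := by
    by_contra! h
    exact hfne (isGenPolyDegLT_zero_iff.1 (hpoly.of_apply_smul_eq_smul heig fun k _ hk => h k hk))
  have habs : |a| ^ K = |lam| := by rw [← abs_pow, hK]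
  have ha1 : |a| ≠ 1 := fun h => hlam1 (by rw [← habs, h, one_pow])
  have hK_unique : ∀ k, |a| ^ k = |lam| → k = K :=
    fun k hk => pow_right_injective₀ (abs_pos.2 ha) ha1 (hk.trans habs.symm)
  have hne : ∀ k, k ≠ K → a ^ k ≠ lam := fun k hk h => hk (hK_unique k (by rw [← abs_pow, h]))
  have hK0 : K ≠ 0 := by
    rintro rfl
    exact hlam1 (by rw [← habs, pow_zero])
  have hdeg : IsGenPolyDegLT (K + 1) f :=
    hpoly.of_apply_smul_eq_smul heig fun k hk _ => hne k (by omega)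
  refine ⟨K, ⟨Finset.mem_Icc.2 ⟨Nat.one_le_iff_ne_zero.2 hK0, by omega⟩, habs,
    hdeg.exists_eq_diag (hdeg.apply_smul_eq_pow_smul heig fun k hk => hne k hk.ne)⟩,
    fun k hk => hK_unique k hk.2.1⟩

theorem stmt_7 {V B : Type*} [AddCommGroup V] [Module ℚ V] [AddCommGroup B] [Module ℚ B]
    (a b c₁ c₂ c₃ c₄ c₅ c₆ : ℚ)
    (ha : a ≠ 0) (hb : b ≠ 0) (hc₁ : c₁ ≠ 0) (hc₃ : c₃ ≠ 0) (hc₁₂ : c₁ + c₂ ≠ 0)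
    (hlam0 : |(c₃ + c₅ + c₆) / (c₁ + c₂)| ≠ 0)
    (hlam1 : |(c₃ + c₅ + c₆) / (c₁ + c₂)| ≠ 1)
    (f : V → B) (hf0 : f 0 = 0) (hfne : f ≠ 0)
    (hf : ∀ x y : V,
      c₁ • f (a • x + b • y) + c₂ • f (a • x - b • y) =
        c₃ • f x + c₄ • f y + c₅ • f (x + y) + c₆ • f (x - y)) :
    ∃! k : ℕ, k ∈ Finset.Icc 1 4 ∧
      |a| ^ k = |(c₃ + c₅ + c₆) / (c₁ + c₂)| ∧
      ∃ A : (Fin k → V) → B, MultiAdditive A ∧ SymmetricFn A ∧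
        ∀ x : V, f x = A (fun _ => x) :=
  stmt_7_general a b c₁ c₂ c₃ c₄ c₅ c₆ ha hb hc₃ hc₁₂ hlam1 f hf0 hfne hf
end

section
/- Suppose f: V → B is a generalized polynomial function: f(x) = a_0 + Σ_{k=1}^m a_k*(x) where each a_k is symmetric k-additive, with a_m* ≠ 0. If f(0) = 0 and f(ax) = λ f(x) for all x ∈ V, where a ∈ ℚ and λ ∈ ℚ satisfy |λ| ∉ {0, 1} and |a|^k ≠ |λ| for all but one index k ∈ {1, ..., m}, then f equals a single monomial term: f = a_k* for the unique k with a^k = λ. -/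
/- Comparing `f (a • x)` with `lam • f x` term by term gives
`∑ₖ (a ^ k - lam) • aₖ*(x) = 0` for every `x`. Replacing `x` by `q • x` turns this into
a polynomial identity in `q ∈ ℚ` with coefficients `(a ^ k - lam) • aₖ*(x)`, so each of them
vanishes; when `|a| ^ k ≠ |lam|` the scalar is nonzero and hence `aₖ*(x) = 0`,
leaving only the `k₀` term. -/

namespace MultiAdditive

variable {V B : Type*} [AddCommGroup V] [AddCommGroup B] [Module ℚ B]
  {k : ℕ} {A : (Fin k → V) → B}

theorem const_smul (hA : MultiAdditive A) (c : ℚ) : MultiAdditive fun v => c • A v :=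
  fun i v x y => by simp only [hA i v x y, smul_add]

variable [Module ℚ V]

theorem map_update_smul (hA : MultiAdditive A) (i : Fin k) (v : Fin k → V) (q : ℚ) (x : V) :
    A (Function.update v i (q • x)) = q • A (Function.update v i x) :=
  map_rat_smul (AddMonoidHom.mk' (fun y => A (Function.update v i y)) (hA i v)) q x

theorem map_piecewise_smul (hA : MultiAdditive A) (c : Fin k → ℚ) (v : Fin k → V)
    (s : Finset (Fin k)) :
    A (s.piecewise (fun i => c i • v i) v) = (∏ i ∈ s, c i) • A v := by
  induction s using Finset.induction_on with
  | empty => simp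
  | insert j s hj ih =>
    set w := s.piecewise (fun i => c i • v i) v
    have hwj : w j = v j := Finset.piecewise_eq_of_notMem _ _ _ hj
    rw [Finset.piecewise_insert, ← hwj, hA.map_update_smul, Function.update_eq_self, ih,
      Finset.prod_insert hj, mul_smul]

theorem map_diag_smul (hA : MultiAdditive A) (q : ℚ) (x : V) :
    A (fun _ => q • x) = q ^ k • A (fun _ => x) := by
  simpa using hA.map_piecewise_smul (fun _ => q) (fun _ => x) Finset.univ

theorem map_diag_zero (hA : MultiAdditive A) (hk : k ≠ 0) : A (fun _ => 0) = 0 := by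
  simpa [zero_pow hk] using hA.map_diag_smul 0 (0 : V)

end MultiAdditive

theorem eq_zero_of_forall_sum_pow_smul_eq_zero {K M : Type*} [Field K] [Infinite K]
    [AddCommGroup M] [Module K M] {s : Finset ℕ} {b : ℕ → M}
    (h : ∀ q : K, ∑ k ∈ s, q ^ k • b k = 0) : ∀ k ∈ s, b k = 0 := by
  intro k hk
  rw [← Module.forall_dual_apply_eq_zero_iff K]
  intro φ
  set p : Polynomial K := ∑ j ∈ s, Polynomial.C (φ (b j)) * Polynomial.X ^ j
  have hp : p = 0 := Polynomial.funext fun q => by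
    have hq := congrArg φ (h q)
    simp only [map_sum, map_smul, map_zero, smul_eq_mul] at hq
    simp only [p, Polynomial.eval_finsetSum, Polynomial.eval_mul, Polynomial.eval_C,
      Polynomial.eval_pow, Polynomial.eval_X, Polynomial.eval_zero, ← hq, mul_comm]
  have hcoeff : p.coeff k = φ (b k) := by
    rw [Polynomial.finsetSum_coeff, Finset.sum_eq_single_of_mem k hk]
    · simp
    · intro j _ hjk
      simp [Ne.symm hjk]
  simpa [hp] using hcoeff.symm

theorem diag_eq_zero_of_forall_sum_diag_eq_zero {V B : Type*} [AddCommGroup V] [Module ℚ V]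
    [AddCommGroup B] [Module ℚ B] {s : Finset ℕ} {A : (k : ℕ) → (Fin k → V) → B}
    (hA : ∀ k ∈ s, MultiAdditive (A k)) (h : ∀ y : V, ∑ k ∈ s, A k (fun _ => y) = 0) :
    ∀ k ∈ s, ∀ x : V, A k (fun _ => x) = 0 := by
  intro k hk x
  refine eq_zero_of_forall_sum_pow_smul_eq_zero (K := ℚ) (b := fun j => A j (fun _ => x))
    (fun q => ?_) k hk
  rw [← h (q • x)]
  exact Finset.sum_congr rfl fun j hj => ((hA j hj).map_diag_smul q x).symm

theorem stmt_8_general {V B : Type*} [AddCommGroup V] [Module ℚ V] [AddCommGroup B] [Module ℚ B]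
    (m : ℕ) (f : V → B) (a₀ : B) (A : (k : ℕ) → (Fin k → V) → B)
    (hA : ∀ k ∈ Finset.Icc 1 m, MultiAdditive (A k) ∧ SymmetricFn (A k))
    (hrep : ∀ x : V, f x = a₀ + ∑ k ∈ Finset.Icc 1 m, A k (fun _ => x))
    (a lam : ℚ) (hf0 : f 0 = 0) (hhom : ∀ x : V, f (a • x) = lam • f x)
    (k₀ : ℕ) (hk₀ : k₀ ∈ Finset.Icc 1 m)
    (huniq : ∀ k ∈ Finset.Icc 1 m, k ≠ k₀ → |a| ^ k ≠ |lam|) :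
    ∀ x : V, f x = A k₀ (fun _ => x) := by
  have hadd : ∀ k ∈ Finset.Icc 1 m, MultiAdditive (A k) := fun k hk => (hA k hk).1
  have ha₀ : a₀ = 0 := by
    have h0 := hrep 0
    rwa [hf0, Finset.sum_eq_zero fun k hk => (hadd k hk).map_diag_zero
      (Nat.one_le_iff_ne_zero.mp (Finset.mem_Icc.mp hk).1), add_zero, eq_comm] at h0
  have hdiff : ∀ y : V, ∑ k ∈ Finset.Icc 1 m, (a ^ k - lam) • A k (fun _ => y) = 0 := by
    intro y
    have hy := hhom y
    rw [hrep, hrep, ha₀, zero_add, zero_add, Finset.smul_sum,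
      Finset.sum_congr rfl fun k hk => (hadd k hk).map_diag_smul a y] at hy
    simp only [sub_smul, Finset.sum_sub_distrib, hy, sub_self]
  have hvanish := diag_eq_zero_of_forall_sum_diag_eq_zero
    (fun k hk => (hadd k hk).const_smul (a ^ k - lam)) hdiff
  intro x
  rw [hrep x, ha₀, zero_add]
  refine Finset.sum_eq_single_of_mem k₀ hk₀ fun k hk hne => ?_
  have hcoeff : a ^ k - lam ≠ 0 := fun h => huniq k hk hne (by rw [← abs_pow, sub_eq_zero.mp h])
  exact (smul_eq_zero.mp (hvanish k hk x)).resolve_left hcoeff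

theorem stmt_8 {V B : Type*} [AddCommGroup V] [Module ℚ V] [AddCommGroup B] [Module ℚ B]
    (m : ℕ) (f : V → B) (a₀ : B) (A : (k : ℕ) → (Fin k → V) → B)
    (hA : ∀ k ∈ Finset.Icc 1 m, MultiAdditive (A k) ∧ SymmetricFn (A k))
    (hrep : ∀ x : V, f x = a₀ + ∑ k ∈ Finset.Icc 1 m, A k (fun _ => x))
    (htop : (fun x : V => A m (fun _ => x)) ≠ 0)
    (a lam : ℚ) (hf0 : f 0 = 0) (hhom : ∀ x : V, f (a • x) = lam • f x)
    (hlam0 : |lam| ≠ 0) (hlam1 : |lam| ≠ 1)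
    (k₀ : ℕ) (hk₀ : k₀ ∈ Finset.Icc 1 m) (hk₀eq : a ^ k₀ = lam)
    (huniq : ∀ k ∈ Finset.Icc 1 m, k ≠ k₀ → |a| ^ k ≠ |lam|) :
    ∀ x : V, f x = A k₀ (fun _ => x) :=
  stmt_8_general m f a₀ A hA hrep a lam hf0 hhom k₀ hk₀ huniq
end

section
/- Under the hypotheses of the stability theorem with |λ| > 1 (λ = (c_3+c_5+c_6)/(c_1+c_2)), if ‖Df(x,y)‖ ≤ ψ(x,y) and f(0)=0, then setting y = 0 yields ‖f(ax)/λ - f(x)‖ ≤ ψ(x,0)/|c_3+c_5+c_6| for all x ∈ V; consequently, if ψ(ax,0) ≤ L|λ|ψ(x,0) with L < 1, the sequence f(a^n x)/λ^n is Cauchy in the Banach space X for each x with ψ(x,0) finite, and its limit T(x) satisfies T(ax) = λ T(x). -/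
/-!
Putting `y = 0` and using `f 0 = 0`, the defect inequality reads
`‖(c₁ + c₂) • f (a • x) - (c₃ + c₅ + c₆) • f x‖ ≤ ψ x 0`, which after division by
`c₃ + c₅ + c₆` is the first claim. This is the input of the direct method for the map
`x ↦ a • x`: the consecutive terms of `λ⁻ⁿ • f (aⁿ • x)` differ by at most
`ψ x 0 / ‖c₃ + c₅ + c₆‖ * Lⁿ`, so the sequence is Cauchy, and passing to the limit in
`λ⁻ⁿ • f (aⁿ • (a • x)) = λ • λ⁻⁽ⁿ⁺¹⁾ • f (aⁿ⁺¹ • x)` gives `T (a • x) = λ • T x`.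
-/

open Filter Topology

section DirectMethod

variable {𝕜 α X : Type*} [NormedField 𝕜] [NormedAddCommGroup X] [NormedSpace 𝕜 X]

theorem norm_inv_div_smul_sub {p q : 𝕜} (hq : q ≠ 0) (u v : X) :
    ‖(q / p)⁻¹ • u - v‖ = ‖p • u - q • v‖ / ‖q‖ := by
  have h : (q / p)⁻¹ • u - v = q⁻¹ • (p • u - q • v) := by
    match_scalars <;> field_simp
  rw [h, norm_smul, norm_inv, inv_mul_eq_div]

theorem le_pow_mul_of_le_mul_comp {g : α → α} {φ : α → ℝ} {c : ℝ} (hc : 0 ≤ c)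
    (h : ∀ x, φ (g x) ≤ c * φ x) (n : ℕ) (x : α) : φ (g^[n] x) ≤ c ^ n * φ x := by
  induction n with
  | zero => simp
  | succ n ih =>
    calc φ (g^[n + 1] x) ≤ c * φ (g^[n] x) := by
          rw [Function.iterate_succ_apply']; exact h _
      _ ≤ c * (c ^ n * φ x) := mul_le_mul_of_nonneg_left ih hc
      _ = c ^ (n + 1) * φ x := by ring

variable {g : α → α} {f : α → X} {lam : 𝕜} {φ : α → ℝ} {L : ℝ}

theorem norm_inv_pow_smul_iterate_succ_sub_le (hlam : lam ≠ 0) (hL : 0 ≤ L)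
    (hf : ∀ x, ‖lam⁻¹ • f (g x) - f x‖ ≤ φ x) (hφ : ∀ x, φ (g x) ≤ L * ‖lam‖ * φ x)
    (n : ℕ) (x : α) :
    ‖(lam ^ (n + 1))⁻¹ • f (g^[n + 1] x) - (lam ^ n)⁻¹ • f (g^[n] x)‖ ≤ φ x * L ^ n := by
  have hlam' : ‖lam‖ ≠ 0 := norm_ne_zero_iff.mpr hlam
  have h : (lam ^ (n + 1))⁻¹ • f (g^[n + 1] x) - (lam ^ n)⁻¹ • f (g^[n] x)
      = (lam ^ n)⁻¹ • (lam⁻¹ • f (g (g^[n] x)) - f (g^[n] x)) := by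
    rw [Function.iterate_succ_apply', smul_sub, smul_smul, pow_succ, mul_inv]
  rw [h, norm_smul, norm_inv, norm_pow]
  calc (‖lam‖ ^ n)⁻¹ * ‖lam⁻¹ • f (g (g^[n] x)) - f (g^[n] x)‖
      ≤ (‖lam‖ ^ n)⁻¹ * φ (g^[n] x) := by gcongr; exact hf _
    _ ≤ (‖lam‖ ^ n)⁻¹ * ((L * ‖lam‖) ^ n * φ x) := by
        gcongr; exact le_pow_mul_of_le_mul_comp (by positivity) hφ n x
    _ = φ x * L ^ n := by field_simp; ring

theorem cauchySeq_inv_pow_smul_iterate (hlam : lam ≠ 0) (hL₀ : 0 ≤ L) (hL₁ : L < 1)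
    (hf : ∀ x, ‖lam⁻¹ • f (g x) - f x‖ ≤ φ x) (hφ : ∀ x, φ (g x) ≤ L * ‖lam‖ * φ x)
    (x : α) : CauchySeq fun n : ℕ => (lam ^ n)⁻¹ • f (g^[n] x) :=
  cauchySeq_of_le_geometric L (φ x) hL₁ fun n => by
    rw [dist_eq_norm, norm_sub_rev]
    exact norm_inv_pow_smul_iterate_succ_sub_le hlam hL₀ hf hφ n x

theorem limit_comp_eq_smul_of_tendsto_inv_pow_smul_iterate (hlam : lam ≠ 0) {T : α → X}
    (hT : ∀ x, Tendsto (fun n : ℕ => (lam ^ n)⁻¹ • f (g^[n] x)) atTop (𝓝 (T x))) (x : α) :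
    T (g x) = lam • T x := by
  have hshift : Tendsto (fun n : ℕ => lam • (lam ^ (n + 1))⁻¹ • f (g^[n + 1] x)) atTop
      (𝓝 (lam • T x)) :=
    ((hT x).comp (tendsto_add_atTop_nat 1)).const_smul lam
  refine tendsto_nhds_unique (hT (g x)) (hshift.congr fun n => ?_)
  rw [Function.iterate_succ_apply, smul_smul, pow_succ', mul_inv, ← mul_assoc,
    mul_inv_cancel₀ hlam, one_mul]

end DirectMethod

theorem stmt_12_general {F V X : Type*} [NormedField F] [AddCommGroup V] [Module F V]
    [NormedAddCommGroup X] [NormedSpace F X] [CompleteSpace X]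
    (a b c₁ c₂ c₃ c₄ c₅ c₆ : F)
    (lam : F) (hlam : lam = (c₃ + c₅ + c₆) / (c₁ + c₂)) (hlam1 : 1 < ‖lam‖)
    (f : V → X) (hf0 : f 0 = 0)
    (ψ : V → V → ℝ)
    (hfψ : ∀ x y : V,
      ‖c₁ • f (a • x + b • y) + c₂ • f (a • x - b • y) - c₃ • f x - c₄ • f y
        - c₅ • f (x + y) - c₆ • f (x - y)‖ ≤ ψ x y) :
    (∀ x : V, ‖lam⁻¹ • f (a • x) - f x‖ ≤ ψ x 0 / ‖c₃ + c₅ + c₆‖) ∧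
    (∀ L : ℝ, 0 < L → L < 1 → (∀ x : V, ψ (a • x) 0 ≤ L * ‖lam‖ * ψ x 0) →
      (∀ x : V, CauchySeq (fun n : ℕ => (lam ^ n)⁻¹ • f (a ^ n • x))) ∧
      ∃ T : V → X,
        (∀ x : V, Tendsto (fun n : ℕ => (lam ^ n)⁻¹ • f (a ^ n • x)) atTop (𝓝 (T x))) ∧
        ∀ x : V, T (a • x) = lam • T x) := by
  have hlam0 : lam ≠ 0 := norm_pos_iff.mp (by linarith)
  have hc356 : c₃ + c₅ + c₆ ≠ 0 := fun h => hlam0 (by rw [hlam, h, zero_div])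
  have hstab : ∀ x : V, ‖lam⁻¹ • f (a • x) - f x‖ ≤ ψ x 0 / ‖c₃ + c₅ + c₆‖ := by
    intro x
    have h := hfψ x 0
    simp only [smul_zero, add_zero, sub_zero, hf0] at h
    rw [hlam, norm_inv_div_smul_sub hc356, add_smul, add_smul, add_smul, ← sub_sub, ← sub_sub]
    exact div_le_div_of_nonneg_right h (norm_nonneg _)
  refine ⟨hstab, fun L hL₀ hL₁ hψL => ?_⟩
  simp only [← smul_iterate_apply]
  have hψL' : ∀ x : V, ψ (a • x) 0 / ‖c₃ + c₅ + c₆‖ ≤ L * ‖lam‖ * (ψ x 0 / ‖c₃ + c₅ + c₆‖) :=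
    fun x => by rw [mul_div_assoc']; exact div_le_div_of_nonneg_right (hψL x) (norm_nonneg _)
  have hcauchy := cauchySeq_inv_pow_smul_iterate hlam0 hL₀.le hL₁ hstab hψL'
  choose T hT using fun x => cauchySeq_tendsto_of_complete (hcauchy x)
  exact ⟨hcauchy, T, hT, limit_comp_eq_smul_of_tendsto_inv_pow_smul_iterate hlam0 hT⟩

theorem stmt_12 {F V X : Type*} [NormedField F] [AddCommGroup V] [Module F V]
    [NormedAddCommGroup X] [NormedSpace F X] [CompleteSpace X]
    (a b c₁ c₂ c₃ c₄ c₅ c₆ : F)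
    (ha : a ≠ 0) (hb : b ≠ 0) (hc₁ : c₁ ≠ 0) (hc₃ : c₃ ≠ 0) (hc₁₂ : c₁ + c₂ ≠ 0)
    (hc356 : c₃ + c₅ + c₆ ≠ 0)
    (lam : F) (hlam : lam = (c₃ + c₅ + c₆) / (c₁ + c₂)) (hlam1 : 1 < ‖lam‖)
    (f : V → X) (hf0 : f 0 = 0)
    (ψ : V → V → ℝ) (hψ : ∀ x y, 0 ≤ ψ x y)
    (hfψ : ∀ x y : V,
      ‖c₁ • f (a • x + b • y) + c₂ • f (a • x - b • y) - c₃ • f x - c₄ • f y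
        - c₅ • f (x + y) - c₆ • f (x - y)‖ ≤ ψ x y) :
    (∀ x : V, ‖lam⁻¹ • f (a • x) - f x‖ ≤ ψ x 0 / ‖c₃ + c₅ + c₆‖) ∧
    (∀ L : ℝ, 0 < L → L < 1 → (∀ x : V, ψ (a • x) 0 ≤ L * ‖lam‖ * ψ x 0) →
      (∀ x : V, CauchySeq (fun n : ℕ => (lam ^ n)⁻¹ • f (a ^ n • x))) ∧
      ∃ T : V → X,
        (∀ x : V, Tendsto (fun n : ℕ => (lam ^ n)⁻¹ • f (a ^ n • x)) atTop (𝓝 (T x))) ∧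
        ∀ x : V, T (a • x) = lam • T x) :=
  stmt_12_general a b c₁ c₂ c₃ c₄ c₅ c₆ lam hlam hlam1 f hf0 ψ hfψ
end

section
/- Every solution f: V → B (V, B vector spaces over ℚ) of the quartic functional equation f(2x+y) + f(2x-y) = 4f(x+y) + 4f(x-y) + 24f(x) - 6f(y) with f(0) = 0 satisfies f(2x) = 16 f(x) for all x, and is a monomial function of degree 4, i.e., the diagonal of a symmetric 4-additive function. -/
/-
Putting `x = 0` shows that `f` is even, and then the equation says that the fourth central
difference `f (x + 2h) - 4 f (x + h) + 6 f x - 4 f (x - h) + f (x - 2h)` equals `24 f h`,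
whatever `x` is.
Let the group algebra `ℚ[V]` act on `V → B` by translations and let `I` be the ideal of elements
sending `f` to a constant function. Then `I` contains `δ_h ^ 2` for every central second difference
`δ_h = τ_h + τ_{-h} - 2`, and polarization in the commutative ring `ℚ[V]` shows that it contains
every product `Δ_{h₁} Δ_{h₂} Δ_{h₃} Δ_{h₄}` of forward differences `Δ_h = τ_h - 1`.
So `A h = (Δ_{h₁} ⋯ Δ_{h₄} f) 0 / 24` is symmetric since `ℚ[V]` is commutative, additive in each
`hᵢ` since `Δ_{u + v} = Δ_u + Δ_v + Δ_u Δ_v` and `Δ_u` kills constants, and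
`A (x, x, x, x) = (Δ_x ^ 4 f) 0 / 24 = f x`.
-/

open AddMonoidAlgebra

theorem Ideal.mem_of_natCast_mul_mem {R : Type*} [CommRing R] [Algebra ℚ R] {I : Ideal R}
    {n : ℕ} (hn : n ≠ 0) {x : R} (h : (n : R) * x ∈ I) : x ∈ I := by
  have hu : IsUnit (n : R) := by
    simpa using (IsUnit.mk0 (n : ℚ) (Nat.cast_ne_zero.2 hn)).map (algebraMap ℚ R)
  exact (I.unit_mul_mem_iff_mem hu).1 h

section GroupAlgebra
variable {V : Type*} [AddCommGroup V]

noncomputable def fwdDiffElem (v : V) : ℚ[V] := single v 1 - 1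

noncomputable def centralDiffElem (v : V) : ℚ[V] := single v 1 + single (-v) 1 - 2

theorem single_mul_single_one (u v : V) :
    (single u 1 * single v 1 : ℚ[V]) = single (u + v) 1 := by
  rw [single_mul_single, one_mul]

theorem fwdDiffElem_add (u v : V) :
    fwdDiffElem (u + v) = fwdDiffElem u + fwdDiffElem v + fwdDiffElem u * fwdDiffElem v := by
  unfold fwdDiffElem
  linear_combination (-1 : ℚ[V]) * single_mul_single_one u v

theorem single_mul_centralDiffElem (v : V) :
    single v 1 * centralDiffElem v = fwdDiffElem v ^ 2 := by
  have h : (single v 1 * single (-v) 1 : ℚ[V]) = 1 := by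
    rw [single_mul_single_one, add_neg_cancel, one_def]
  unfold centralDiffElem fwdDiffElem
  linear_combination h

theorem centralDiffElem_zero : centralDiffElem (0 : V) = 0 := by
  rw [centralDiffElem, neg_zero, ← one_def]; norm_num

theorem centralDiffElem_add_add_centralDiffElem_sub (y z : V) :
    centralDiffElem (y + z) + centralDiffElem (y - z) =
      centralDiffElem y * centralDiffElem z + 2 * centralDiffElem y + 2 * centralDiffElem z := by
  have h₁ := single_mul_single_one y z
  have h₂ : (single y 1 * single (-z) 1 : ℚ[V]) = single (y - z) 1 := by
    rw [single_mul_single_one, sub_eq_add_neg]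
  have h₃ : (single (-y) 1 * single z 1 : ℚ[V]) = single (-(y - z)) 1 := by
    rw [single_mul_single_one, neg_sub, sub_eq_neg_add]
  have h₄ : (single (-y) 1 * single (-z) 1 : ℚ[V]) = single (-(y + z)) 1 := by
    rw [single_mul_single_one, neg_add]
  unfold centralDiffElem
  linear_combination (-1 : ℚ[V]) * (h₁ + h₂ + h₃ + h₄)

variable {I : Ideal ℚ[V]}

theorem centralDiffElem_mul_mem (hI : ∀ h, centralDiffElem h ^ 2 ∈ I) (y z : V) :
    centralDiffElem y * centralDiffElem z ∈ I := by
  have hsum := centralDiffElem_add_add_centralDiffElem_sub y z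
  have hprod := centralDiffElem_add_add_centralDiffElem_sub (y + z) (y - z)
  have hy := centralDiffElem_add_add_centralDiffElem_sub y y
  have hz := centralDiffElem_add_add_centralDiffElem_sub z z
  rw [show y + z + (y - z) = y + y by abel, show y + z - (y - z) = z + z by abel] at hprod
  rw [sub_self, centralDiffElem_zero] at hy hz
  set p := centralDiffElem y
  set q := centralDiffElem z
  set P := centralDiffElem (y + z)
  set M := centralDiffElem (y - z)
  -- `hsum` is `P + M = pq + 2p + 2q` and the other three give `PM = (p - q) ^ 2`;
  -- expand `P ^ 2 + M ^ 2 = (P + M) ^ 2 - 2PM`.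
  have key : ((12 : ℕ) : ℚ[V]) * (p * q) =
      P ^ 2 + M ^ 2 - 2 * p ^ 2 - 2 * q ^ 2 - (q ^ 2 + 4 * q) * p ^ 2 - 4 * p * q ^ 2 := by
    push_cast
    linear_combination (-(P + M + p * q + 2 * p + 2 * q + 4)) * hsum - 2 * hprod + 2 * hy + 2 * hz
  refine Ideal.mem_of_natCast_mul_mem (n := 12) (by norm_num) ?_
  rw [key]
  have hp := hI y
  have hq := hI z
  exact I.sub_mem (I.sub_mem (I.sub_mem (I.sub_mem (I.add_mem (hI _) (hI _))
    (I.mul_mem_left _ hp)) (I.mul_mem_left _ hq)) (I.mul_mem_left _ hp)) (I.mul_mem_left _ hq)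

theorem fwdDiffElem_mul_mul_mem {r : ℚ[V]} (hr : ∀ h, fwdDiffElem h ^ 2 * r ∈ I) (y z : V) :
    fwdDiffElem y * fwdDiffElem z * r ∈ I := by
  set a := fwdDiffElem y
  set b := fwdDiffElem z
  have key : ((2 : ℕ) : ℚ[V]) * (a * b * r) = fwdDiffElem (y + z) ^ 2 * r - a ^ 2 * r - b ^ 2 * r
      - (b ^ 2 + 2 * b) * (a ^ 2 * r) - 2 * a * (b ^ 2 * r) := by
    rw [fwdDiffElem_add]; push_cast; ring
  refine Ideal.mem_of_natCast_mul_mem (n := 2) (by norm_num) ?_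
  rw [key]
  have ha := hr y
  have hb := hr z
  exact I.sub_mem (I.sub_mem (I.sub_mem (I.sub_mem (hr _) ha) hb)
    (I.mul_mem_left _ ha)) (I.mul_mem_left _ hb)

theorem prod_fwdDiffElem_mem (hI : ∀ h, centralDiffElem h ^ 2 ∈ I) (v : Fin 4 → V) :
    ∏ i, fwdDiffElem (v i) ∈ I := by
  have h₂ (y z : V) : fwdDiffElem y ^ 2 * fwdDiffElem z ^ 2 ∈ I := by
    rw [← single_mul_centralDiffElem, ← single_mul_centralDiffElem, mul_mul_mul_comm]
    exact I.mul_mem_left _ (centralDiffElem_mul_mem hI y z)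
  have h₃ (a b z : V) : fwdDiffElem a * fwdDiffElem b * fwdDiffElem z ^ 2 ∈ I :=
    fwdDiffElem_mul_mul_mem (fun y => h₂ y z) a b
  have h₄ := fwdDiffElem_mul_mul_mem (r := fwdDiffElem (v 0) * fwdDiffElem (v 1))
    (fun z => by rw [mul_comm]; exact h₃ _ _ z) (v 2) (v 3)
  rw [Fin.prod_univ_four]
  convert h₄ using 1
  ring

end GroupAlgebra

section Translation
variable {V B : Type*} [AddCommGroup V] [AddCommGroup B] [Module ℚ B]

noncomputable def shiftAlgHom : ℚ[V] →ₐ[ℚ] Module.End ℚ (V → B) :=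
  lift ℚ (Module.End ℚ (V → B)) V
    { toFun := fun v => LinearMap.funLeft ℚ B (· + v.toAdd)
      map_one' := by ext; simp
      map_mul' := fun u v => by ext; simp [add_assoc] }

theorem shiftAlgHom_single_mul_apply (v : V) (r : ℚ[V]) (g : V → B) (x : V) :
    shiftAlgHom (single v 1 * r) g x = shiftAlgHom r g (x + v) := by
  simp [shiftAlgHom, LinearMap.funLeft_apply]

theorem shiftAlgHom_fwdDiffElem_mul_apply (v : V) (r : ℚ[V]) (g : V → B) (x : V) :
    shiftAlgHom (fwdDiffElem v * r) g x = shiftAlgHom r g (x + v) - shiftAlgHom r g x := by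
  rw [fwdDiffElem, sub_mul, one_mul, map_sub, LinearMap.sub_apply, Pi.sub_apply,
    shiftAlgHom_single_mul_apply]

theorem shiftAlgHom_centralDiffElem_mul_apply (v : V) (r : ℚ[V]) (g : V → B) (x : V) :
    shiftAlgHom (centralDiffElem v * r) g x =
      shiftAlgHom r g (x + v) + shiftAlgHom r g (x - v) - (2 : ℚ) • shiftAlgHom r g x := by
  rw [centralDiffElem, sub_mul, add_mul, two_mul, map_sub, map_add, map_add, two_smul]
  simp only [LinearMap.sub_apply, LinearMap.add_apply, Pi.sub_apply, Pi.add_apply,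
    shiftAlgHom_single_mul_apply, ← sub_eq_add_neg]

/-- `r ∈ constIdeal g` iff `shiftAlgHom r g` is constant. -/
def constIdeal (g : V → B) : Ideal ℚ[V] where
  carrier := {r | ∀ v, shiftAlgHom (fwdDiffElem v * r) g = 0}
  add_mem' {r s} hr hs v := by rw [mul_add, map_add, LinearMap.add_apply, hr v, hs v, add_zero]
  zero_mem' v := by rw [mul_zero, map_zero, LinearMap.zero_apply]
  smul_mem' s r hr v := by
    rw [smul_eq_mul, mul_left_comm, map_mul, Module.End.mul_apply, hr v, map_zero]

noncomputable def mixedDiffForm (g : V → B) (n : ℕ) (v : Fin n → V) : B :=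
  (n.factorial : ℚ)⁻¹ • shiftAlgHom (∏ i, fwdDiffElem (v i)) g 0

theorem mixedDiffForm_symmetric (g : V → B) (n : ℕ) : SymmetricFn (mixedDiffForm g n) := by
  intro σ v
  simp only [mixedDiffForm, Function.comp_apply, Equiv.prod_comp σ (fun i => fwdDiffElem (v i))]

theorem mixedDiffForm_multiAdditive {g : V → B} {n : ℕ}
    (hg : ∀ v : Fin n → V, ∏ i, fwdDiffElem (v i) ∈ constIdeal g) :
    MultiAdditive (mixedDiffForm g n) := by
  intro i v x y
  have hprod (w : V) : ∏ j, fwdDiffElem (Function.update v i w j) =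
      fwdDiffElem w * ∏ j ∈ Finset.univ \ {i}, fwdDiffElem (v j) := by
    rw [← Finset.prod_update_of_mem (Finset.mem_univ i)]
    exact Finset.prod_congr rfl fun j _ => Function.apply_update (fun _ => fwdDiffElem) v i w j
  have hcross : shiftAlgHom (fwdDiffElem x * (fwdDiffElem y *
      ∏ j ∈ Finset.univ \ {i}, fwdDiffElem (v j))) g = 0 := by
    rw [← hprod]; exact hg _ x
  simp only [mixedDiffForm, hprod, fwdDiffElem_add, add_mul, mul_assoc, map_add,
    LinearMap.add_apply, Pi.add_apply, hcross, Pi.zero_apply, add_zero, smul_add]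

end Translation

section QuarticEquation
variable {V B : Type*} [AddCommGroup V] [Module ℚ V] [AddCommGroup B] [Module ℚ B]

def QuarticEquation (f : V → B) : Prop :=
  ∀ x y : V, f ((2 : ℚ) • x + y) + f ((2 : ℚ) • x - y) =
    (4 : ℚ) • f (x + y) + (4 : ℚ) • f (x - y) + (24 : ℚ) • f x - (6 : ℚ) • f y

variable {f : V → B}

theorem QuarticEquation.apply_two_smul (hf0 : f 0 = 0) (hf : QuarticEquation f) (x : V) :
    f ((2 : ℚ) • x) = (16 : ℚ) • f x := by
  have h := hf x 0
  rw [add_zero, sub_zero, add_zero, sub_zero, hf0] at h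
  linear_combination (norm := module) (2⁻¹ : ℚ) • h

theorem QuarticEquation.apply_neg (hf0 : f 0 = 0) (hf : QuarticEquation f) (y : V) :
    f (-y) = f y := by
  have h := hf 0 y
  rw [smul_zero, zero_add, zero_sub, hf0] at h
  linear_combination (norm := module) (-3⁻¹ : ℚ) • h

theorem QuarticEquation.shiftAlgHom_centralDiffElem_sq_apply (hf0 : f 0 = 0)
    (hf : QuarticEquation f) (h x : V) :
    shiftAlgHom (centralDiffElem h ^ 2) f x = (24 : ℚ) • f h := by
  have e := hf h x
  rw [show (2 : ℚ) • h + x = x + h + h by module, show (2 : ℚ) • h - x = -(x - h - h) by module,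
    add_comm h x, ← neg_sub x h, hf.apply_neg hf0, hf.apply_neg hf0] at e
  rw [sq, ← mul_one (centralDiffElem h * centralDiffElem h), mul_assoc]
  simp only [shiftAlgHom_centralDiffElem_mul_apply, map_one, Module.End.one_apply,
    add_sub_cancel_right, sub_add_cancel]
  linear_combination (norm := module) e

theorem QuarticEquation.centralDiffElem_sq_mem_constIdeal (hf0 : f 0 = 0)
    (hf : QuarticEquation f) (h : V) : centralDiffElem h ^ 2 ∈ constIdeal f := fun v => by
  ext x
  rw [shiftAlgHom_fwdDiffElem_mul_apply, hf.shiftAlgHom_centralDiffElem_sq_apply hf0,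
    hf.shiftAlgHom_centralDiffElem_sq_apply hf0, sub_self, Pi.zero_apply]

theorem QuarticEquation.mixedDiffForm_const (hf0 : f 0 = 0) (hf : QuarticEquation f) (x : V) :
    mixedDiffForm f 4 (fun _ => x) = f x := by
  have h4 : fwdDiffElem x ^ 4 = single x 1 * (single x 1 * centralDiffElem x ^ 2) := by
    rw [← mul_assoc, ← sq, ← mul_pow, single_mul_centralDiffElem, ← pow_mul]
  rw [mixedDiffForm, Finset.prod_const, Finset.card_univ, Fintype.card_fin, h4,
    shiftAlgHom_single_mul_apply, shiftAlgHom_single_mul_apply,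
    hf.shiftAlgHom_centralDiffElem_sq_apply hf0, smul_smul]
  norm_num [Nat.factorial]

end QuarticEquation

theorem stmt_16 {V B : Type*} [AddCommGroup V] [Module ℚ V] [AddCommGroup B] [Module ℚ B]
    (f : V → B) (hf0 : f 0 = 0)
    (hf : ∀ x y : V, f ((2 : ℚ) • x + y) + f ((2 : ℚ) • x - y) =
      (4 : ℚ) • f (x + y) + (4 : ℚ) • f (x - y) + (24 : ℚ) • f x - (6 : ℚ) • f y) :
    (∀ x : V, f ((2 : ℚ) • x) = (16 : ℚ) • f x) ∧
    ∃ A : (Fin 4 → V) → B, MultiAdditive A ∧ SymmetricFn A ∧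
      ∀ x : V, f x = A (fun _ => x) :=
  ⟨QuarticEquation.apply_two_smul hf0 hf, mixedDiffForm f 4,
    mixedDiffForm_multiAdditive
      (prod_fwdDiffElem_mem (QuarticEquation.centralDiffElem_sq_mem_constIdeal hf0 hf)),
    mixedDiffForm_symmetric f 4, fun x => (QuarticEquation.mixedDiffForm_const hf0 hf x).symm⟩
end

section
/- Let f: V → B satisfy the general equation c_1 f(ax+by) + c_2 f(ax-by) = c_3 f(x) + c_4 f(y) + c_5 f(x+y) + c_6 f(x-y) for all x, y ∈ V. Then for all x, y, h_1, h_2 ∈ V: c_1 Δ_{(a-b)h_1} Δ_{(a+b)h_2} f(ax+by) + c_2 Δ_{(a+b)h_1} Δ_{(a-b)h_2} f(ax-by) = c_3 Δ_{h_1} Δ_{h_2} f(x) + c_4 Δ_{-h_1} Δ_{h_2} f(y). -/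
/-! Regard both sides of the functional equation as functions of `(x, y) ∈ V × V` and apply the mixed
second difference with steps `(h₁, -h₁)` and `(h₂, h₂)`. The first step leaves `x + y` fixed and the
second leaves `x - y` fixed, so the terms `f (x + y)` and `f (x - y)` are annihilated. On a term
`f ∘ L` with `L` linear, the operator acts as the second difference of `f` with steps `L (h₁, -h₁)`
and `L (h₂, h₂)`, evaluated at `L (x, y)`; for `L = a • fst ± b • snd` these steps are
`(a ∓ b) • h₁` and `(a ± b) • h₂`. -/

section

variable {F W V B : Type*} [AddCommGroup B]

theorem fdiff_add [Add V] (h : V) (f g : V → B) : fdiff h (f + g) = fdiff h f + fdiff h g := by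
  funext x
  simp only [fdiff, Pi.add_apply]
  abel

theorem fdiff_sub [Add V] (h : V) (f g : V → B) : fdiff h (f - g) = fdiff h f - fdiff h g := by
  funext x
  simp only [fdiff, Pi.sub_apply]
  abel

theorem fdiff_smul [Add V] [Monoid F] [DistribMulAction F B] (h : V) (c : F) (f : V → B) :
    fdiff h (c • f) = c • fdiff h f := by
  funext x
  simp only [fdiff, Pi.smul_apply, smul_sub]

theorem fdiff_comp {M : Type*} [Add W] [Add V] [FunLike M W V] [AddHomClass M W V]
    (L : M) (u : W) (f : V → B) : fdiff u (f ∘ L) = fdiff (L u) f ∘ L := by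
  funext p
  simp only [fdiff, Function.comp_apply, map_add]

theorem fdiff_eq_zero_of_periodic [Add V] {f : V → B} {h : V} (hf : Function.Periodic f h) :
    fdiff h f = 0 := by
  funext x
  simp only [fdiff, hf x, sub_self, Pi.zero_apply]

theorem fdiff_comm [AddCommSemigroup V] (h k : V) (f : V → B) :
    fdiff h (fdiff k f) = fdiff k (fdiff h f) := by
  funext x
  simp only [fdiff, add_right_comm x h k]
  abel

theorem Function.Periodic.fdiff [AddCommSemigroup V] {f : V → B} {h : V}
    (hf : Function.Periodic f h) (k : V) :
    Function.Periodic (fdiff k f) h := by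
  intro x
  simp only [_root_.fdiff, add_right_comm x h k, hf (x + k), hf x]

theorem fdiff_fdiff_add_eq_zero [AddCommSemigroup V] {f g : V → B} {u w : V}
    (hf : Function.Periodic f u) (hg : Function.Periodic g w) :
    fdiff u (fdiff w (f + g)) = 0 := by
  rw [fdiff_add, fdiff_add, fdiff_eq_zero_of_periodic (hf.fdiff w), fdiff_comm,
    fdiff_eq_zero_of_periodic (hg.fdiff u), add_zero]

end

theorem stmt_17 {F V B : Type*} [Field F] [AddCommGroup V] [Module F V]
    [AddCommGroup B] [Module F B]
    (a b c₁ c₂ c₃ c₄ c₅ c₆ : F) (f : V → B)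
    (hf : ∀ x y : V,
      c₁ • f (a • x + b • y) + c₂ • f (a • x - b • y) =
        c₃ • f x + c₄ • f y + c₅ • f (x + y) + c₆ • f (x - y)) :
    ∀ x y h₁ h₂ : V,
      c₁ • (fdiff ((a - b) • h₁) (fdiff ((a + b) • h₂) f)) (a • x + b • y) +
        c₂ • (fdiff ((a + b) • h₁) (fdiff ((a - b) • h₂) f)) (a • x - b • y) =
      c₃ • (fdiff h₁ (fdiff h₂ f)) x + c₄ • (fdiff (-h₁) (fdiff h₂ f)) y := by
  intro x y h₁ h₂
  let fst := LinearMap.fst F V V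
  let snd := LinearMap.snd F V V
  let P := a • fst + b • snd
  let M := a • fst - b • snd
  have hfun : c₁ • f ∘ P + c₂ • f ∘ M - c₃ • f ∘ fst - c₄ • f ∘ snd =
      c₅ • f ∘ (fst + snd) + c₆ • f ∘ (fst - snd) := by
    funext p
    simp only [Pi.add_apply, Pi.sub_apply, Pi.smul_apply, Function.comp_apply, P, M,
      LinearMap.add_apply, LinearMap.sub_apply, LinearMap.smul_apply, fst, snd,
      LinearMap.fst_apply, LinearMap.snd_apply, hf]
    abel
  have hP₁ : P (h₁, -h₁) = (a - b) • h₁ := by simp [P, fst, snd]; module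
  have hP₂ : P (h₂, h₂) = (a + b) • h₂ := by simp [P, fst, snd]; module
  have hM₁ : M (h₁, -h₁) = (a + b) • h₁ := by simp [M, fst, snd]; module
  have hM₂ : M (h₂, h₂) = (a - b) • h₂ := by simp [M, fst, snd]; module
  have key := congrFun (congrArg (fdiff (h₁, -h₁) ∘ fdiff (h₂, h₂)) hfun) (x, y)
  rw [Function.comp_apply, Function.comp_apply, fdiff_fdiff_add_eq_zero] at key
  · simp only [fdiff_add, fdiff_sub, fdiff_smul, fdiff_comp, hP₁, hP₂, hM₁, hM₂, Pi.add_apply,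
      Pi.sub_apply, Pi.smul_apply, Function.comp_apply, Pi.zero_apply] at key
    simp only [P, M, fst, snd, LinearMap.add_apply, LinearMap.sub_apply, LinearMap.smul_apply,
      LinearMap.fst_apply, LinearMap.snd_apply] at key
    rwa [sub_sub, sub_eq_zero] at key
  · exact (Function.Periodic.comp (fun p => by simp [fst, snd]; abel) f).smul c₅
  · exact (Function.Periodic.comp (fun p => by simp [fst, snd]) f).smul c₆
end
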